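/- As an identity of formal power series in q: ∏_{n≥0} (1 + q^{2n+1})^8 − ∏_{n≥0} (1 − q^{2n+1})^8 = 16 q ∏_{n≥1} (1 + q^{2n})^8. -/

import Mathlib

/-!
Rothe's `q`-binomial theorem gives the finite Jacobi triple product
`∏_{k<m} (z + q^(2k+1)) (1 + z q^(2k+1)) = ∑_a [2m, a]_{q²} z^a q^((a-m)²)`.
As `(q²; q²)_{2m} [2m, a]_{q²} ≡ 1` modulo `q^(2 min(a, 2m-a) + 2)`, multiplying by
`(q²; q²)_{2m}` and letting `m → ∞` gives, with `E = ∏ (1 - q^(2n+2))`,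
`E ∏ (1 + q^(2n+1))² = θ₃`, `E ∏ (1 - q^(2n+1))² = θ₄`, `2 E ∏ (1 + q^(2n+2))² = q^(-1/4) θ₂`.
Splitting `ℤ²` into the pairs `(u + v, u - v)` and `(u + v + 1, u - v)` expresses
`θ₃(q)² ± θ₄(q)²` and `θ₂(q)²` through theta series in `q²`, whence Jacobi's
`θ₃⁴ - θ₄⁴ = θ₂⁴`. Substituting the triple products and cancelling `E⁴` gives the identity.
-/

open PowerSeries

noncomputable instance : TopologicalSpace (PowerSeries ℤ) :=
  inferInstanceAs (TopologicalSpace ((Unit →₀ ℕ) → ℤ))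

open Finset Filter Topology

section GaussBinom

variable {R : Type*} [CommRing R]

def gaussBinom (q : R) : ℕ → ℕ → R
  | _, 0 => 1
  | 0, _ + 1 => 0
  | n + 1, k + 1 => q ^ (k + 1) * gaussBinom q n (k + 1) + gaussBinom q n k

@[simp] lemma gaussBinom_zero_right (q : R) (n : ℕ) : gaussBinom q n 0 = 1 := by
  cases n <;> rfl

@[simp] lemma gaussBinom_zero_succ (q : R) (k : ℕ) : gaussBinom q 0 (k + 1) = 0 := rfl

lemma gaussBinom_succ_succ (q : R) (n k : ℕ) :
    gaussBinom q (n + 1) (k + 1) = q ^ (k + 1) * gaussBinom q n (k + 1) + gaussBinom q n k :=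
  rfl

lemma gaussBinom_eq_zero_of_lt (q : R) {n k : ℕ} (h : n < k) : gaussBinom q n k = 0 := by
  induction n generalizing k with
  | zero => obtain ⟨k, rfl⟩ := Nat.exists_eq_add_one.mpr h; rfl
  | succ n ih =>
    obtain ⟨k, rfl⟩ := Nat.exists_eq_add_one.mpr (Nat.zero_lt_of_lt h)
    rw [gaussBinom_succ_succ, ih (by omega), ih (by omega), mul_zero, add_zero]

/-- For `k > n` both sides vanish: the factor `i = n` on the right is `1 - q ^ 0`. -/
lemma prod_one_sub_pow_mul_gaussBinom (q : R) (n k : ℕ) :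
    (∏ i ∈ range k, (1 - q ^ (i + 1))) * gaussBinom q n k
      = ∏ i ∈ range k, (1 - q ^ (n - i)) := by
  induction n generalizing k with
  | zero =>
    cases k with
    | zero => simp
    | succ k => simp [prod_range_succ']
  | succ n ih =>
    cases k with
    | zero => simp
    | succ k =>
      have hk := ih k
      have hk1 := ih (k + 1)
      rw [prod_range_succ, prod_range_succ (fun i => 1 - q ^ (n - i))] at hk1
      rw [prod_range_succ, prod_range_succ' (fun i => 1 - q ^ (n + 1 - i)), gaussBinom_succ_succ]
      simp only [Nat.sub_zero, Nat.add_sub_add_right]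
      rcases le_or_gt k n with hkn | hkn
      · have hpow : q ^ (k + 1) * q ^ (n - k) = q ^ (n + 1) := by
          rw [← pow_add]; congr 1; omega
        linear_combination q ^ (k + 1) * hk1 + (1 - q ^ (k + 1)) * hk
          - (∏ i ∈ range k, (1 - q ^ (n - i))) * hpow
      · have hzero : ∏ i ∈ range k, (1 - q ^ (n - i)) = 0 :=
          prod_eq_zero (mem_range.mpr hkn) (by simp)
        rw [gaussBinom_eq_zero_of_lt q (show n < k + 1 by omega),
          gaussBinom_eq_zero_of_lt q (show n < k by omega), hzero]
        ring

lemma dvd_prod_sub_one {ι : Type*} {d : R} {s : Finset ι} {f : ι → R}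
    (h : ∀ i ∈ s, d ∣ f i - 1) : d ∣ ∏ i ∈ s, f i - 1 := by
  have := SModEq.prod (A := R) (I := Ideal.span {d}) (s := s) (x := f) (y := fun _ => 1)
    fun i hi => SModEq.sub_mem.mpr (Ideal.mem_span_singleton.mpr (h i hi))
  simpa [SModEq.sub_mem, Ideal.mem_span_singleton] using this

lemma pow_dvd_prod_one_sub_pow_mul_gaussBinom_sub_one (q : R) {n a : ℕ} (ha : a ≤ n) :
    q ^ (min a (n - a) + 1) ∣ (∏ i ∈ range n, (1 - q ^ (i + 1))) * gaussBinom q n a - 1 := by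
  have hsplit : (∏ i ∈ range n, (1 - q ^ (i + 1))) * gaussBinom q n a
      = (∏ i ∈ Ico a n, (1 - q ^ (i + 1))) * ∏ i ∈ range a, (1 - q ^ (n - i)) := by
    rw [← prod_range_mul_prod_Ico _ ha, ← prod_one_sub_pow_mul_gaussBinom]
    ring
  have hfactor : ∀ e, min a (n - a) + 1 ≤ e → q ^ (min a (n - a) + 1) ∣ 1 - q ^ e - 1 := by
    intro e he
    rw [sub_sub_cancel_left, dvd_neg]
    exact pow_dvd_pow q he
  have hhigh : q ^ (min a (n - a) + 1) ∣ ∏ i ∈ Ico a n, (1 - q ^ (i + 1)) - 1 :=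
    dvd_prod_sub_one fun i hi => hfactor _ (by simp at hi; omega)
  have hlow : q ^ (min a (n - a) + 1) ∣ ∏ i ∈ range a, (1 - q ^ (n - i)) - 1 :=
    dvd_prod_sub_one fun i hi => hfactor _ (by simp at hi; omega)
  rw [hsplit, show ∀ u v : R, u * v - 1 = u * (v - 1) + (u - 1) from fun u v => by ring]
  exact dvd_add (hlow.mul_left _) hhigh

/-- Rothe's `q`-binomial theorem. -/
theorem prod_add_mul_pow_eq_sum_gaussBinom (q x y : R) (n : ℕ) :
    ∏ i ∈ range n, (x + y * q ^ i)
      = ∑ k ∈ range (n + 1), gaussBinom q n k * q ^ k.choose 2 * y ^ k * x ^ (n - k) := by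
  induction n generalizing y with
  | zero => simp
  | succ n ih =>
    have hchoose : ∀ k, (k + 1).choose 2 = k.choose 2 + k := fun k => by
      rw [Nat.choose_succ_succ, Nat.choose_one_right, add_comm]
    have hshift : ∀ i, x + y * q ^ (i + 1) = x + y * q * q ^ i := fun i => by ring
    rw [prod_range_succ', pow_zero, mul_one]
    simp_rw [hshift]
    rw [ih, sum_range_succ' _ (n + 1)]
    simp only [gaussBinom_succ_succ, gaussBinom_zero_right, add_mul, sum_add_distrib,
      Nat.add_sub_add_right]
    set S := ∑ k ∈ range (n + 1), gaussBinom q n k * q ^ k.choose 2 * (y * q) ^ k * x ^ (n - k)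
      with hS
    have hy : S * y = ∑ k ∈ range (n + 1),
        gaussBinom q n k * q ^ (k + 1).choose 2 * y ^ (k + 1) * x ^ (n - k) := by
      rw [sum_mul]
      refine sum_congr rfl fun k _ => ?_
      rw [hchoose]
      ring
    have hx : S * x = ∑ k ∈ range (n + 1),
        q ^ (k + 1) * gaussBinom q n (k + 1) * q ^ (k + 1).choose 2 * y ^ (k + 1) * x ^ (n - k)
          + x ^ (n + 1) := by
      rw [sum_range_succ, gaussBinom_eq_zero_of_lt q (Nat.lt_succ_self n), hS, sum_range_succ',
        add_mul, sum_mul]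
      simp only [gaussBinom_zero_right, pow_zero, Nat.choose_zero_succ, Nat.sub_zero, mul_zero,
        zero_mul, add_zero]
      congr 1
      · refine sum_congr rfl fun k hk => ?_
        have hnk : n - k = n - (k + 1) + 1 := by simp at hk; omega
        rw [hchoose, hnk]
        ring
      · ring
    simp only [Nat.choose_zero_succ, Nat.sub_zero]
    linear_combination hy + hx

lemma prod_pow_two_mul_add_one (q : R) (m : ℕ) :
    ∏ i ∈ range m, q ^ (2 * i + 1) = q ^ (m ^ 2) := by
  induction m with
  | zero => simp
  | succ m ih => rw [prod_range_succ, ih, ← pow_add]; ring_nf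

lemma two_mul_choose_two_add_add_mul_sub {a m : ℕ} (ha : a ≤ 2 * m) :
    2 * a.choose 2 + a + 2 * m * (2 * m - a) = 3 * m ^ 2 + (((a : ℤ) - m) ^ 2).toNat := by
  have hchoose : ∀ b : ℕ, (2 * b.choose 2 : ℤ) = b * (b - 1) := fun b => by
    induction b with
    | zero => simp
    | succ b ih =>
      rw [Nat.choose_succ_succ, Nat.choose_one_right]
      push_cast
      linear_combination ih
  zify [ha]
  rw [Int.toNat_of_nonneg (sq_nonneg _)]
  linear_combination hchoose a

/-- The finite Jacobi triple product, multiplied by `z ^ m`. -/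
theorem prod_mul_prod_eq_sum_gaussBinom {q : R} (hq : IsLeftRegular q) (z : R) (m : ℕ) :
    ∏ k ∈ range m, ((z + q ^ (2 * k + 1)) * (1 + z * q ^ (2 * k + 1)))
      = ∑ a ∈ range (2 * m + 1),
          gaussBinom (q ^ 2) (2 * m) a * z ^ a * q ^ (((a : ℤ) - m) ^ 2).toNat := by
  -- Rothe's theorem for `∏_{i < 2m} (q^(2m) + z q (q²)^i)`, which is `q^(3m²)` times the left
  -- side.
  have hrothe := prod_add_mul_pow_eq_sum_gaussBinom (q ^ 2) (q ^ (2 * m)) (z * q) (2 * m)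
  have hlow : ∏ i ∈ range m, (q ^ (2 * m) + z * q * (q ^ 2) ^ i)
      = q ^ (m ^ 2) * ∏ k ∈ range m, (z + q ^ (2 * k + 1)) := by
    have hfac : ∀ i ∈ range m, q ^ (2 * m) + z * q * (q ^ 2) ^ i
        = q ^ (2 * i + 1) * (z + q ^ (2 * (m - 1 - i) + 1)) := fun i hi => by
      have : 2 * m = 2 * i + 1 + (2 * (m - 1 - i) + 1) := by simp at hi; omega
      rw [this, pow_add]; ring
    rw [prod_congr rfl hfac, prod_mul_distrib, prod_pow_two_mul_add_one,
      prod_range_reflect (fun k => z + q ^ (2 * k + 1))]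
  have hhigh : ∏ i ∈ range m, (q ^ (2 * m) + z * q * (q ^ 2) ^ (m + i))
      = q ^ (2 * m ^ 2) * ∏ k ∈ range m, (1 + z * q ^ (2 * k + 1)) := by
    have hfac : ∀ i, q ^ (2 * m) + z * q * (q ^ 2) ^ (m + i)
        = q ^ (2 * m) * (1 + z * q ^ (2 * i + 1)) := fun i => by ring
    simp_rw [hfac, prod_mul_distrib, prod_const, card_range, ← pow_mul]
    ring_nf
  have hsum : ∀ a ∈ range (2 * m + 1),
      gaussBinom (q ^ 2) (2 * m) a * (q ^ 2) ^ a.choose 2 * (z * q) ^ a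
          * (q ^ (2 * m)) ^ (2 * m - a)
        = q ^ (3 * m ^ 2)
          * (gaussBinom (q ^ 2) (2 * m) a * z ^ a * q ^ (((a : ℤ) - m) ^ 2).toNat) :=
      fun a ha => by
    calc _ = gaussBinom (q ^ 2) (2 * m) a * z ^ a
          * q ^ (2 * a.choose 2 + a + 2 * m * (2 * m - a)) := by
          rw [pow_add, pow_add, pow_mul, pow_mul, pow_mul]; ring
      _ = _ := by
          rw [two_mul_choose_two_add_add_mul_sub (Nat.lt_succ_iff.mp (mem_range.mp ha)), pow_add]
          ring
  have hsplit := prod_range_add (fun i => q ^ (2 * m) + z * q * (q ^ 2) ^ i) m m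
  rw [← two_mul] at hsplit
  rw [hsplit, hlow, hhigh, sum_congr rfl hsum, ← mul_sum] at hrothe
  refine hq.pow (3 * m ^ 2) ?_
  simp only
  rw [← hrothe, prod_mul_distrib]
  ring

lemma pow_dvd_prod_mul_sum_gaussBinom_sub_sum (q : R) (n K : ℕ) (t : ℕ → R)
    (h : ∀ a ≤ n, q ^ K ∣ q ^ (2 * (min a (n - a) + 1)) * t a) :
    q ^ K ∣ (∑ a ∈ range (n + 1), gaussBinom (q ^ 2) n a * t a)
        * ∏ i ∈ range n, (1 - q ^ (2 * i + 2)) - ∑ a ∈ range (n + 1), t a := by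
  rw [sum_mul, ← sum_sub_distrib]
  refine dvd_sum fun a ha => (h a (Nat.lt_succ_iff.mp (mem_range.mp ha))).trans ?_
  have hbase : ∀ i, q ^ (2 * i + 2) = (q ^ 2) ^ (i + 1) := fun i => by ring
  simp_rw [hbase]
  rw [show gaussBinom (q ^ 2) n a * t a * ∏ i ∈ range n, (1 - (q ^ 2) ^ (i + 1)) - t a
      = ((∏ i ∈ range n, (1 - (q ^ 2) ^ (i + 1))) * gaussBinom (q ^ 2) n a - 1) * t a by ring,
    pow_mul]
  exact mul_dvd_mul_right (pow_dvd_prod_one_sub_pow_mul_gaussBinom_sub_one (q ^ 2)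
    (Nat.lt_succ_iff.mp (mem_range.mp ha))) _

end GaussBinom

section PiTopology

open WithPiTopology

variable {R : Type*} [CommRing R] [TopologicalSpace R]

lemma summable_of_X_pow_dvd {ι : Type*} {f : ι → R⟦X⟧} (e : ι → ℕ)
    (he : ∀ N, {i | e i ≤ N}.Finite) (hf : ∀ i, X ^ e i ∣ f i) : Summable f := by
  refine (summable_iff_summable_coeff R).mpr fun N =>
    summable_of_hasFiniteSupport ((he N).subset fun i hi => ?_)
  by_contra hlt
  exact hi (X_pow_dvd_iff.mp (hf i) N (not_le.mp hlt))

lemma multipliable_one_add_of_X_pow_dvd {f : ℕ → R⟦X⟧} (hf : ∀ n, X ^ n ∣ f n) :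
    Multipliable (1 + f ·) := by
  refine multipliable_one_add_of_tendsto_order_atTop_nhds_top R
    (ENat.tendsto_nhds_top_iff_natCast_lt.mpr fun N => ?_)
  filter_upwards [eventually_gt_atTop N] with n hn
  exact (Nat.cast_lt.mpr hn).trans_le
    (nat_le_order _ _ fun i hi => X_pow_dvd_iff.mp (hf n) i hi)

lemma eq_of_tendsto_of_X_pow_dvd [T2Space R] {u v : ℕ → R⟦X⟧} {a b : R⟦X⟧}
    (hu : Tendsto u atTop (𝓝 a)) (hv : Tendsto v atTop (𝓝 b))
    (huv : ∀ m, X ^ m ∣ u m - v m) : a = b := by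
  ext n
  have hcoeff := continuous_coeff R n
  refine tendsto_nhds_unique ((hcoeff.tendsto a).comp hu)
    (((hcoeff.tendsto b).comp hv).congr' ?_)
  filter_upwards [eventually_gt_atTop n] with m hm
  have := X_pow_dvd_iff.mp (huv m) n hm
  rw [map_sub, sub_eq_zero] at this
  exact this.symm

end PiTopology

def parityPairEquiv : (ℤ × ℤ) ⊕ (ℤ × ℤ) ≃ ℤ × ℤ where
  toFun := Sum.elim (fun p => (p.1 + p.2, p.1 - p.2)) (fun p => (p.1 + p.2 + 1, p.1 - p.2))
  invFun p := if (p.1 + p.2) % 2 = 0 then .inl ((p.1 + p.2) / 2, (p.1 - p.2) / 2)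
    else .inr ((p.1 + p.2 - 1) / 2, (p.1 - p.2 - 1) / 2)
  left_inv := by
    rintro (⟨u, v⟩ | ⟨u, v⟩)
    · simp only [Sum.elim_inl, show (u + v + (u - v)) % 2 = 0 by omega, if_true, Sum.inl.injEq,
        Prod.mk.injEq]
      omega
    · simp only [Sum.elim_inr, show ¬ (u + v + 1 + (u - v)) % 2 = 0 by omega, if_false,
        Sum.inr.injEq, Prod.mk.injEq]
      omega
  right_inv := by
    rintro ⟨a, b⟩
    by_cases h : (a + b) % 2 = 0
    · simp only [h, if_true, Sum.elim_inl, Prod.mk.injEq]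
      omega
    · simp only [h, if_false, Sum.elim_inr, Prod.mk.injEq]
      omega

lemma HasSum.of_parityPairEquiv {M : Type*} [AddCommMonoid M] [TopologicalSpace M]
    [ContinuousAdd M] {f : ℤ × ℤ → M} {a b : M}
    (ha : HasSum (fun p : ℤ × ℤ => f (p.1 + p.2, p.1 - p.2)) a)
    (hb : HasSum (fun p : ℤ × ℤ => f (p.1 + p.2 + 1, p.1 - p.2)) b) : HasSum f (a + b) :=
  parityPairEquiv.hasSum_iff.mp (ha.sum hb)

lemma Int.natCast_toNat_mul_self (n : ℤ) : ((n * n).toNat : ℤ) = n * n :=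
  Int.toNat_of_nonneg (mul_self_nonneg n)

lemma Int.mul_add_one_nonneg (n : ℤ) : 0 ≤ n * (n + 1) := by
  rcases le_or_gt 0 n with h | h <;> nlinarith

lemma Int.natCast_toNat_mul_add_one (n : ℤ) : ((n * (n + 1)).toNat : ℤ) = n * (n + 1) :=
  Int.toNat_of_nonneg (Int.mul_add_one_nonneg n)

lemma two_mul_add_one_le_min_add_toNat_mul_self {a m : ℕ} (ha : a ≤ 2 * m) :
    2 * m + 1 ≤ 2 * (min a (2 * m - a) + 1) + (((a : ℤ) - m) * ((a : ℤ) - m)).toNat := by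
  rcases le_total a m with h | h
  · rw [min_eq_left (by omega)]
    zify
    rw [Int.natCast_toNat_mul_self]
    nlinarith
  · rw [min_eq_right (by omega)]
    zify [ha]
    rw [Int.natCast_toNat_mul_self]
    nlinarith

lemma two_mul_le_min_add_toNat_mul_add_one {a m : ℕ} (ha : a ≤ 2 * m) :
    2 * m ≤ 2 * (min a (2 * m - a) + 1) + (((a : ℤ) - m) * ((a : ℤ) - m + 1)).toNat := by
  rcases le_total a m with h | h
  · rw [min_eq_left (by omega)]
    zify
    rw [Int.natCast_toNat_mul_add_one]
    nlinarith [Int.mul_add_one_nonneg ((a : ℤ) - m + 1)]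
  · rw [min_eq_right (by omega)]
    zify [ha]
    rw [Int.natCast_toNat_mul_add_one]
    nlinarith [sq_nonneg ((a : ℤ) - m - 1)]

noncomputable section ThetaSeries

-- The topology on `ℤ⟦X⟧` above is that of `PowerSeries.WithPiTopology`, whose instances are
-- scoped.
instance : IsTopologicalRing ℤ⟦X⟧ := WithPiTopology.instIsTopologicalRing ℤ

instance : T3Space ℤ⟦X⟧ := inferInstanceAs (T3Space ((Unit →₀ ℕ) → ℤ))

def thetaTerm (s : ℤ) (k c : ℕ) (n : ℤ) : ℤ⟦X⟧ :=
  (s : ℤ⟦X⟧) ^ n.natAbs * X ^ (k * (n * (n + c)).toNat)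

/-- `∑_{n ∈ ℤ} s^n q^(k n (n + c))`: `theta 1 k 0` and `theta (-1) k 0` are `θ₃(q^k)` and
`θ₄(q^k)`, and `theta 1 k 1` is `q^(-k/4) θ₂(q^k)`. -/
def theta (s : ℤ) (k c : ℕ) : ℤ⟦X⟧ :=
  ∑' n, thetaTerm s k c n

lemma finite_setOf_mul_toNat_le {k : ℕ} (hk : 0 < k) (c N : ℕ) :
    {n : ℤ | k * (n * (n + c)).toNat ≤ N}.Finite := by
  refine (Set.finite_Icc (-(N + c : ℤ)) N).subset fun n hn => ?_
  have hle : n * (n + c) ≤ N := by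
    have := Int.self_le_toNat (n * (n + c))
    have : (n * (n + c)).toNat ≤ N := le_trans (Nat.le_mul_of_pos_left _ hk) hn
    omega
  constructor <;> nlinarith

lemma summable_thetaTerm (s : ℤ) {k : ℕ} (hk : 0 < k) (c : ℕ) : Summable (thetaTerm s k c) :=
  summable_of_X_pow_dvd _ (finite_setOf_mul_toNat_le hk c) fun _ => dvd_mul_left _ _

lemma hasSum_thetaTerm_mul_thetaTerm (s s' : ℤ) {k k' : ℕ} (hk : 0 < k) (hk' : 0 < k')
    (c c' : ℕ) :
    HasSum (fun p : ℤ × ℤ => thetaTerm s k c p.1 * thetaTerm s' k' c' p.2)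
      (theta s k c * theta s' k' c') := by
  refine (summable_thetaTerm s hk c).hasSum.mul (summable_thetaTerm s' hk' c').hasSum ?_
  refine summable_of_X_pow_dvd
    (fun p => k * (p.1 * (p.1 + c)).toNat + k' * (p.2 * (p.2 + c')).toNat)
    (fun N => ((finite_setOf_mul_toNat_le hk c N).prod (finite_setOf_mul_toNat_le hk' c' N)).subset
      fun p hp => ⟨by simp at hp ⊢; omega, by simp at hp ⊢; omega⟩)
    fun p => ?_
  rw [pow_add]
  exact mul_dvd_mul (dvd_mul_left _ _) (dvd_mul_left _ _)

theorem theta_sq {s : ℤ} (hs : s ^ 2 = 1) :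
    theta s 1 0 ^ 2 = theta 1 2 0 ^ 2 + (s : ℤ⟦X⟧) * X * theta 1 2 1 ^ 2 := by
  have hs' : (s : ℤ⟦X⟧) ^ 2 = 1 := by rw [← Int.cast_pow, hs, Int.cast_one]
  have heven : HasSum
      (fun p : ℤ × ℤ => thetaTerm s 1 0 (p.1 + p.2) * thetaTerm s 1 0 (p.1 - p.2))
      (theta 1 2 0 * theta 1 2 0) := by
    refine (hasSum_thetaTerm_mul_thetaTerm 1 1 two_pos two_pos 0 0).congr_fun fun ⟨u, v⟩ => ?_
    simp only [thetaTerm, Int.cast_one, one_pow, one_mul, Nat.cast_zero, add_zero]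
    rw [mul_mul_mul_comm, ← pow_add, ← pow_add, ← pow_add,
      pow_eq_pow_mod ((u + v).natAbs + (u - v).natAbs) hs',
      show ((u + v).natAbs + (u - v).natAbs) % 2 = 0 by omega, pow_zero, one_mul]
    congr 1
    zify
    simp only [Int.natCast_toNat_mul_self]
    ring
  have hodd : HasSum
      (fun p : ℤ × ℤ => thetaTerm s 1 0 (p.1 + p.2 + 1) * thetaTerm s 1 0 (p.1 - p.2))
      ((s : ℤ⟦X⟧) * X * (theta 1 2 1 * theta 1 2 1)) := by
    refine ((hasSum_thetaTerm_mul_thetaTerm 1 1 two_pos two_pos 1 1).mul_left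
      ((s : ℤ⟦X⟧) * X)).congr_fun fun ⟨u, v⟩ => ?_
    simp only [thetaTerm, Int.cast_one, one_pow, one_mul, Nat.cast_zero, Nat.cast_one, add_zero]
    rw [mul_mul_mul_comm, ← pow_add, ← pow_add,
      pow_eq_pow_mod ((u + v + 1).natAbs + (u - v).natAbs) hs',
      show ((u + v + 1).natAbs + (u - v).natAbs) % 2 = 1 by omega, pow_one, ← pow_add,
      mul_assoc, ← pow_succ']
    congr 2
    zify
    simp only [Int.natCast_toNat_mul_self, Int.natCast_toNat_mul_add_one]
    ring
  have hpair := HasSum.of_parityPairEquiv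
    (f := fun p : ℤ × ℤ => thetaTerm s 1 0 p.1 * thetaTerm s 1 0 p.2) heven hodd
  rw [sq, sq, sq, (hasSum_thetaTerm_mul_thetaTerm s s one_pos one_pos 0 0).unique hpair]

theorem theta_one_one_one_sq : theta 1 1 1 ^ 2 = 2 * theta 1 2 0 * theta 1 2 1 := by
  have heven : HasSum
      (fun p : ℤ × ℤ => thetaTerm 1 1 1 (p.1 + p.2) * thetaTerm 1 1 1 (p.1 - p.2))
      (theta 1 2 1 * theta 1 2 0) := by
    refine (hasSum_thetaTerm_mul_thetaTerm 1 1 two_pos two_pos 1 0).congr_fun fun ⟨u, v⟩ => ?_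
    simp only [thetaTerm, Int.cast_one, one_pow, one_mul, Nat.cast_zero, Nat.cast_one, add_zero]
    rw [← pow_add, ← pow_add]
    congr 1
    zify
    simp only [Int.natCast_toNat_mul_self, Int.natCast_toNat_mul_add_one]
    ring
  -- `(u + v + 1) (u + v + 2) + (u - v) (u - v + 1) = 2 (u + 1)² + 2 v (v + 1)`
  have hodd : HasSum
      (fun p : ℤ × ℤ => thetaTerm 1 1 1 (p.1 + p.2 + 1) * thetaTerm 1 1 1 (p.1 - p.2))
      (theta 1 2 0 * theta 1 2 1) := by
    have hshift := (Equiv.prodCongr (Equiv.addRight (1 : ℤ)) (Equiv.refl ℤ)).hasSum_iff.mpr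
      (hasSum_thetaTerm_mul_thetaTerm 1 1 two_pos two_pos 0 1)
    refine hshift.congr_fun fun ⟨u, v⟩ => ?_
    simp only [Function.comp_apply, Equiv.prodCongr_apply, Equiv.coe_addRight, Equiv.coe_refl,
      Prod.map_apply, id_eq, thetaTerm, Int.cast_one, one_pow, one_mul, Nat.cast_zero,
      Nat.cast_one, add_zero]
    rw [← pow_add, ← pow_add]
    congr 1
    zify
    simp only [Int.natCast_toNat_mul_self, Int.natCast_toNat_mul_add_one]
    ring
  have hpair := HasSum.of_parityPairEquiv
    (f := fun p : ℤ × ℤ => thetaTerm 1 1 1 p.1 * thetaTerm 1 1 1 p.2) heven hodd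
  rw [sq, (hasSum_thetaTerm_mul_thetaTerm 1 1 one_pos one_pos 1 1).unique hpair]
  ring

theorem theta_pow_four_sub_theta_pow_four :
    theta 1 1 0 ^ 4 - theta (-1) 1 0 ^ 4 = X * theta 1 1 1 ^ 4 := by
  have h₃ := theta_sq (s := 1) (by norm_num)
  have h₄ := theta_sq (s := -1) (by norm_num)
  push_cast at h₃ h₄
  calc theta 1 1 0 ^ 4 - theta (-1) 1 0 ^ 4
      = (theta 1 1 0 ^ 2 - theta (-1) 1 0 ^ 2) * (theta 1 1 0 ^ 2 + theta (-1) 1 0 ^ 2) := by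
        ring
    _ = X * (theta 1 1 1 ^ 2) ^ 2 := by rw [h₃, h₄, theta_one_one_one_sq]; ring
    _ = X * theta 1 1 1 ^ 4 := by ring

lemma isLeftRegular_X : IsLeftRegular (X : ℤ⟦X⟧) :=
  (IsRegular.of_ne_zero X_ne_zero).left

lemma prod_one_add_sq_eq_sum_gaussBinom_mul_thetaTerm {s : ℤ} (hs : s ^ 2 = 1) (m : ℕ) :
    (∏ k ∈ range m, (1 + (s : ℤ⟦X⟧) * X ^ (2 * k + 1))) ^ 2
      = ∑ a ∈ range (2 * m + 1), gaussBinom (X ^ 2) (2 * m) a * thetaTerm s 1 0 (a - m) := by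
  have hs' : (s : ℤ⟦X⟧) ^ 2 = 1 := by rw [← Int.cast_pow, hs, Int.cast_one]
  have hjtp := prod_mul_prod_eq_sum_gaussBinom isLeftRegular_X (s : ℤ⟦X⟧) m
  have hlhs : ∀ k ∈ range m,
      ((s : ℤ⟦X⟧) + X ^ (2 * k + 1)) * (1 + (s : ℤ⟦X⟧) * X ^ (2 * k + 1))
        = (s : ℤ⟦X⟧) * (1 + (s : ℤ⟦X⟧) * X ^ (2 * k + 1)) ^ 2 := fun k _ => by
    linear_combination (-((X : ℤ⟦X⟧) ^ (2 * k + 1) + s * X ^ (2 * (2 * k + 1)))) * hs'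
  have hrhs : ∀ a ∈ range (2 * m + 1),
      gaussBinom (X ^ 2) (2 * m) a * (s : ℤ⟦X⟧) ^ a * X ^ (((a : ℤ) - m) ^ 2).toNat
        = (s : ℤ⟦X⟧) ^ m * (gaussBinom (X ^ 2) (2 * m) a * thetaTerm s 1 0 (a - m)) :=
      fun a _ => by
    have hsign : (s : ℤ⟦X⟧) ^ a = s ^ m * s ^ ((a : ℤ) - m).natAbs := by
      rw [← pow_add, pow_eq_pow_mod a hs', pow_eq_pow_mod (m + _) hs']
      congr 1
      omega
    rw [thetaTerm, hsign, Nat.cast_zero, add_zero, one_mul, pow_two ((a : ℤ) - m)]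
    ring
  rw [prod_congr rfl hlhs, prod_mul_distrib, prod_const, card_range, sum_congr rfl hrhs,
    ← mul_sum, prod_pow] at hjtp
  have hunit : (s : ℤ⟦X⟧) ^ m * (s : ℤ⟦X⟧) ^ m = 1 := by
    rw [← mul_pow, ← sq, hs', one_pow]
  linear_combination (s : ℤ⟦X⟧) ^ m * hjtp
    - ((∏ k ∈ range m, (1 + (s : ℤ⟦X⟧) * X ^ (2 * k + 1))) ^ 2
      - ∑ a ∈ range (2 * m + 1), gaussBinom (X ^ 2) (2 * m) a * thetaTerm s 1 0 (a - m)) * hunit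

lemma two_mul_prod_mul_prod_eq_sum_gaussBinom_mul_thetaTerm (m : ℕ) :
    2 * (∏ k ∈ range m, (1 + (X : ℤ⟦X⟧) ^ (2 * k + 2)))
        * ∏ k ∈ range (m + 1), (1 + (X : ℤ⟦X⟧) ^ (2 * k + 2))
      = ∑ a ∈ range (2 * (m + 1) + 1),
          gaussBinom (X ^ 2) (2 * (m + 1)) a * thetaTerm 1 1 1 (a - (m + 1 : ℕ)) := by
  have hjtp := prod_mul_prod_eq_sum_gaussBinom isLeftRegular_X X (m + 1)
  have hlhs : ∀ k ∈ range (m + 1),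
      ((X : ℤ⟦X⟧) + X ^ (2 * k + 1)) * (1 + X * X ^ (2 * k + 1))
        = X * ((1 + X ^ (2 * k)) * (1 + X ^ (2 * k + 2))) := fun k _ => by ring
  have heven : ∏ k ∈ range (m + 1), (1 + (X : ℤ⟦X⟧) ^ (2 * k))
      = 2 * ∏ k ∈ range m, (1 + (X : ℤ⟦X⟧) ^ (2 * k + 2)) := by
    rw [prod_range_succ', mul_zero, pow_zero, mul_comm]
    norm_num [mul_add]
  have hrhs : ∀ a ∈ range (2 * (m + 1) + 1),
      gaussBinom (X ^ 2) (2 * (m + 1)) a * (X : ℤ⟦X⟧) ^ a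
          * X ^ (((a : ℤ) - (m + 1 : ℕ)) ^ 2).toNat
        = X ^ (m + 1)
          * (gaussBinom (X ^ 2) (2 * (m + 1)) a * thetaTerm 1 1 1 (a - (m + 1 : ℕ))) :=
      fun a _ => by
    have hexp : a + (((a : ℤ) - (m + 1 : ℕ)) ^ 2).toNat
        = m + 1 + 1 * (((a : ℤ) - (m + 1 : ℕ)) * ((a : ℤ) - (m + 1 : ℕ) + (1 : ℕ))).toNat := by
      zify
      rw [Int.toNat_of_nonneg (sq_nonneg _), Int.natCast_toNat_mul_add_one]
      ring
    rw [thetaTerm, Int.cast_one, one_pow, one_mul, mul_assoc, ← pow_add, hexp, pow_add]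
    ring
  rw [prod_congr rfl hlhs, prod_mul_distrib, prod_const, card_range, prod_mul_distrib, heven,
    sum_congr rfl hrhs, ← mul_sum] at hjtp
  refine isLeftRegular_X.pow (m + 1) ?_
  simp only
  linear_combination hjtp

lemma multipliable_one_add_mul_X_pow_two_mul_add (c : ℤ) (b : ℕ) :
    Multipliable fun n : ℕ => 1 + (c : ℤ⟦X⟧) * X ^ (2 * n + b) :=
  multipliable_one_add_of_X_pow_dvd fun n => (pow_dvd_pow X (by omega)).mul_left _

lemma multipliable_one_sub_X_pow_two_mul_add (b : ℕ) :
    Multipliable fun n : ℕ => 1 - (X : ℤ⟦X⟧) ^ (2 * n + b) := by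
  simpa [← sub_eq_add_neg] using multipliable_one_add_mul_X_pow_two_mul_add (-1) b

lemma tendsto_sum_thetaTerm (s : ℤ) {k : ℕ} (hk : 0 < k) (c : ℕ) :
    Tendsto (fun m : ℕ => ∑ a ∈ range (2 * m + 1), thetaTerm s k c (a - m)) atTop
      (𝓝 (theta s k c)) := by
  have hIcc : ∀ m : ℕ, ∑ a ∈ range (2 * m + 1), thetaTerm s k c (a - m)
      = ∑ n ∈ Icc (-m : ℤ) m, thetaTerm s k c n := fun m =>
    sum_nbij' (fun a => (a : ℤ) - m) (fun n => (n + m).toNat)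
      (fun a ha => by simp at ha ⊢; omega) (fun n hn => by simp at hn ⊢; omega)
      (fun a _ => by omega) (fun n hn => by simp at hn; omega) fun _ _ => rfl
  simp_rw [hIcc]
  exact (summable_thetaTerm s hk c).hasSum.comp tendsto_Icc_neg

theorem tprod_sq_mul_tprod_eq_theta {s : ℤ} (hs : s ^ 2 = 1) :
    (∏' n : ℕ, (1 + (s : ℤ⟦X⟧) * X ^ (2 * n + 1))) ^ 2
        * ∏' n : ℕ, (1 - (X : ℤ⟦X⟧) ^ (2 * n + 2))
      = theta s 1 0 := by
  have hA := (multipliable_one_add_mul_X_pow_two_mul_add s 1).hasProd.tendsto_prod_nat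
  have hE := ((multipliable_one_sub_X_pow_two_mul_add 2).hasProd.tendsto_prod_nat).comp
    (tendsto_atTop_mono (fun m => Nat.le_mul_of_pos_left m two_pos) tendsto_id)
  refine eq_of_tendsto_of_X_pow_dvd ((hA.pow 2).mul hE) (tendsto_sum_thetaTerm s one_pos 0)
    fun m => (pow_dvd_pow X (show m ≤ 2 * m + 1 by omega)).trans ?_
  simp only [Function.comp_apply]
  rw [prod_one_add_sq_eq_sum_gaussBinom_mul_thetaTerm hs]
  refine pow_dvd_prod_mul_sum_gaussBinom_sub_sum X (2 * m) (2 * m + 1)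
    (fun a => thetaTerm s 1 0 (a - m)) fun a ha => ?_
  rw [thetaTerm, mul_left_comm, ← pow_add]
  refine dvd_mul_of_dvd_right (pow_dvd_pow X ?_) _
  simpa using two_mul_add_one_le_min_add_toNat_mul_self ha

theorem two_mul_tprod_sq_mul_tprod_eq_theta :
    2 * (∏' n : ℕ, (1 + (X : ℤ⟦X⟧) ^ (2 * n + 2))) ^ 2
        * ∏' n : ℕ, (1 - (X : ℤ⟦X⟧) ^ (2 * n + 2))
      = theta 1 1 1 := by
  have hC := (multipliable_one_add_mul_X_pow_two_mul_add 1 2).hasProd.tendsto_prod_nat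
  simp only [Int.cast_one, one_mul] at hC
  have hE := ((multipliable_one_sub_X_pow_two_mul_add 2).hasProd.tendsto_prod_nat).comp
    (tendsto_atTop_mono (fun m => Nat.le_mul_of_pos_left (m + 1) two_pos)
      (tendsto_add_atTop_nat 1))
  rw [sq, ← mul_assoc]
  refine eq_of_tendsto_of_X_pow_dvd
    (((hC.const_mul 2).mul (hC.comp (tendsto_add_atTop_nat 1))).mul hE)
    ((tendsto_sum_thetaTerm 1 one_pos 1).comp (tendsto_add_atTop_nat 1))
    fun m => (pow_dvd_pow X (show m ≤ 2 * (m + 1) by omega)).trans ?_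
  simp only [Function.comp_apply]
  rw [two_mul_prod_mul_prod_eq_sum_gaussBinom_mul_thetaTerm]
  refine pow_dvd_prod_mul_sum_gaussBinom_sub_sum X (2 * (m + 1)) (2 * (m + 1))
    (fun a => thetaTerm 1 1 1 (a - (m + 1 : ℕ))) fun a ha => ?_
  rw [thetaTerm, mul_left_comm, ← pow_add]
  refine dvd_mul_of_dvd_right (pow_dvd_pow X ?_) _
  simpa using two_mul_le_min_add_toNat_mul_add_one ha

end ThetaSeries

/-- Jacobi's identity for eighth powers of the classical theta products. -/
theorem jacobi_eighth_powers :
    (∏' n : ℕ, (1 + (X : ℤ⟦X⟧) ^ (2 * n + 1)) ^ 8)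
        - (∏' n : ℕ, (1 - (X : ℤ⟦X⟧) ^ (2 * n + 1)) ^ 8)
      = 16 * X * ∏' n : ℕ, (1 + (X : ℤ⟦X⟧) ^ (2 * n + 2)) ^ 8 := by
  have hA := multipliable_one_add_mul_X_pow_two_mul_add 1 1
  have hC := multipliable_one_add_mul_X_pow_two_mul_add 1 2
  simp only [Int.cast_one, one_mul] at hA hC
  rw [hA.tprod_pow, (multipliable_one_sub_X_pow_two_mul_add 1).tprod_pow, hC.tprod_pow]
  have hE : ∏' n : ℕ, (1 - (X : ℤ⟦X⟧) ^ (2 * n + 2)) ≠ 0 := fun h => by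
    simpa [h] using (multipliable_one_sub_X_pow_two_mul_add 2).map_tprod constantCoeff
      (WithPiTopology.continuous_constantCoeff ℤ)
  set E := ∏' n : ℕ, (1 - (X : ℤ⟦X⟧) ^ (2 * n + 2))
  have h₃ : (∏' n : ℕ, (1 + (X : ℤ⟦X⟧) ^ (2 * n + 1))) ^ 2 * E = theta 1 1 0 := by
    simpa using tprod_sq_mul_tprod_eq_theta (s := 1) (by norm_num)
  have h₄ : (∏' n : ℕ, (1 - (X : ℤ⟦X⟧) ^ (2 * n + 1))) ^ 2 * E = theta (-1) 1 0 := by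
    simpa [← sub_eq_add_neg] using tprod_sq_mul_tprod_eq_theta (s := -1) (by norm_num)
  refine mul_right_cancel₀ (pow_ne_zero 4 hE) ?_
  calc _ = ((∏' n : ℕ, (1 + (X : ℤ⟦X⟧) ^ (2 * n + 1))) ^ 2 * E) ^ 4
        - ((∏' n : ℕ, (1 - (X : ℤ⟦X⟧) ^ (2 * n + 1))) ^ 2 * E) ^ 4 := by ring
    _ = X * theta 1 1 1 ^ 4 := by rw [h₃, h₄, theta_pow_four_sub_theta_pow_four]
    _ = _ := by rw [← two_mul_tprod_sq_mul_tprod_eq_theta]; ring
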